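/- In a (k,d)-one-sided bipartite graph with d ≥ n−k, for every edge {v,w} the number of common neighbors satisfies |N(v)∩N(w)| ≥ d−k when both endpoints are in V₁, and |N(v)∩N(w)| = d−k when one endpoint is in V₁ and one in V₂; consequently min over edges of |N(v)∩N(w)|/max(deg v, deg w) = (d−k)/d. -/

import Mathlib

/-- The normalized Laplacian `L = I - D⁻¹ A` of a graph, as a real matrix. -/
noncomputable def normLap {V : Type*} [Fintype V] [DecidableEq V] (G : SimpleGraph V)
    [DecidableRel G.Adj] : Matrix V V ℝ :=
  1 - Matrix.of (fun v w => if G.Adj v w then 1 / (G.degree v : ℝ) else 0)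

/-- A `(k,d)`-one-sided bipartite graph: the vertex set splits as `V₁ ⊔ V₂` with
`|V₂| = k`, every vertex of `V₁` adjacent to every vertex of `V₂`, no edges inside
`V₂`, and every vertex of `V₁` of degree `d`. -/
def IsOneSidedBipartite {V : Type*} [Fintype V] [DecidableEq V] (G : SimpleGraph V)
    [DecidableRel G.Adj] (V₁ V₂ : Finset V) (k d : ℕ) : Prop :=
  Disjoint V₁ V₂ ∧ V₁ ∪ V₂ = Finset.univ ∧ V₂.card = k ∧
  (∀ v ∈ V₁, ∀ w ∈ V₂, G.Adj v w) ∧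
  (∀ v ∈ V₂, ∀ w ∈ V₂, ¬ G.Adj v w) ∧
  (∀ v ∈ V₁, G.degree v = d)

/-!
A vertex `w ∈ V₂` sees exactly `V₁`, while `v ∈ V₁` sees all of `V₂` plus `d - k` vertices of
`V₁`; hence an edge between the two sides has exactly `d - k` common neighbours, and its larger
degree is `d` because `n - k ≤ d`. Two adjacent vertices of `V₁` have `d + d` neighbours among
at most `n` vertices, so they share at least `2d - n ≥ d - k` of them. The ratio `(d - k) / d`
is therefore attained on every cross edge and is a lower bound on all edges.
-/

open Finset

namespace SimpleGraph

variable {V : Type*} [Fintype V] [DecidableEq V] (G : SimpleGraph V) [DecidableRel G.Adj]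

theorem ncard_commonNeighbors (v w : V) :
    (G.commonNeighbors v w).ncard = #(G.neighborFinset v ∩ G.neighborFinset w) := by
  rw [← Set.ncard_coe_finset, coe_inter, coe_neighborFinset, coe_neighborFinset,
    commonNeighbors_eq]

theorem degree_add_degree_le_card_add_ncard_commonNeighbors (v w : V) :
    G.degree v + G.degree w ≤ Fintype.card V + (G.commonNeighbors v w).ncard := by
  rw [ncard_commonNeighbors, ← card_neighborFinset_eq_degree, ← card_neighborFinset_eq_degree,
    ← card_union_add_card_inter]
  exact Nat.add_le_add_right (card_le_univ _) _

end SimpleGraph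

namespace IsOneSidedBipartite

variable {V : Type*} [Fintype V] [DecidableEq V] {G : SimpleGraph V} [DecidableRel G.Adj]
  {V₁ V₂ : Finset V} {k d : ℕ} {v w : V}

theorem card_right (hG : IsOneSidedBipartite G V₁ V₂ k d) : #V₂ = k := hG.2.2.1

theorem adj_of_mem_left_of_mem_right (hG : IsOneSidedBipartite G V₁ V₂ k d) (hv : v ∈ V₁)
    (hw : w ∈ V₂) : G.Adj v w :=
  hG.2.2.2.1 v hv w hw

theorem not_adj_of_mem_right (hG : IsOneSidedBipartite G V₁ V₂ k d) (hv : v ∈ V₂)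
    (hw : w ∈ V₂) : ¬G.Adj v w :=
  hG.2.2.2.2.1 v hv w hw

theorem degree_of_mem_left (hG : IsOneSidedBipartite G V₁ V₂ k d) (hv : v ∈ V₁) :
    G.degree v = d :=
  hG.2.2.2.2.2 v hv

theorem mem_or_mem (hG : IsOneSidedBipartite G V₁ V₂ k d) (u : V) : u ∈ V₁ ∨ u ∈ V₂ :=
  mem_union.mp (hG.2.1 ▸ mem_univ u)

theorem card_left_add (hG : IsOneSidedBipartite G V₁ V₂ k d) : #V₁ + k = Fintype.card V := by
  rw [← hG.card_right, ← card_union_of_disjoint hG.1, hG.2.1, card_univ]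

theorem neighborFinset_eq_left (hG : IsOneSidedBipartite G V₁ V₂ k d) (hw : w ∈ V₂) :
    G.neighborFinset w = V₁ := by
  ext u
  rw [SimpleGraph.mem_neighborFinset]
  refine ⟨fun hwu => (hG.mem_or_mem u).resolve_right (hG.not_adj_of_mem_right hw · hwu),
    fun hu => (hG.adj_of_mem_left_of_mem_right hu hw).symm⟩

theorem degree_of_mem_right (hG : IsOneSidedBipartite G V₁ V₂ k d) (hw : w ∈ V₂) :
    G.degree w = Fintype.card V - k := by
  rw [← SimpleGraph.card_neighborFinset_eq_degree, hG.neighborFinset_eq_left hw,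
    ← hG.card_left_add, Nat.add_sub_cancel]

theorem right_subset_neighborFinset (hG : IsOneSidedBipartite G V₁ V₂ k d) (hv : v ∈ V₁) :
    V₂ ⊆ G.neighborFinset v :=
  fun u hu => (G.mem_neighborFinset v u).mpr (hG.adj_of_mem_left_of_mem_right hv hu)

theorem le_of_mem_left (hG : IsOneSidedBipartite G V₁ V₂ k d) (hv : v ∈ V₁) : k ≤ d := by
  rw [← hG.card_right, ← hG.degree_of_mem_left hv, ← SimpleGraph.card_neighborFinset_eq_degree]
  exact card_le_card (hG.right_subset_neighborFinset hv)

theorem ncard_commonNeighbors_of_mem_left_of_mem_right (hG : IsOneSidedBipartite G V₁ V₂ k d)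
    (hv : v ∈ V₁) (hw : w ∈ V₂) : (G.commonNeighbors v w).ncard = d - k := by
  have hN : G.neighborFinset v ∩ V₁ = G.neighborFinset v \ V₂ := by
    ext u
    simp only [mem_inter, mem_sdiff]
    refine and_congr_right fun _ => ⟨fun hu hu₂ => disjoint_left.mp hG.1 hu hu₂,
      fun hu₂ => (hG.mem_or_mem u).resolve_right hu₂⟩
  rw [G.ncard_commonNeighbors, hG.neighborFinset_eq_left hw, hN,
    card_sdiff_of_subset (hG.right_subset_neighborFinset hv), hG.card_right,
    G.card_neighborFinset_eq_degree, hG.degree_of_mem_left hv]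

theorem sub_le_ncard_commonNeighbors_of_mem_left (hG : IsOneSidedBipartite G V₁ V₂ k d)
    (hd : Fintype.card V - k ≤ d) (hv : v ∈ V₁) (hw : w ∈ V₁) :
    d - k ≤ (G.commonNeighbors v w).ncard := by
  have := G.degree_add_degree_le_card_add_ncard_commonNeighbors v w
  rw [hG.degree_of_mem_left hv, hG.degree_of_mem_left hw] at this
  omega

theorem ratio_commonNeighbors_of_mem_left_of_mem_right (hG : IsOneSidedBipartite G V₁ V₂ k d)
    (hd : Fintype.card V - k ≤ d) (hv : v ∈ V₁) (hw : w ∈ V₂) :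
    ((G.commonNeighbors v w).ncard : ℝ) / ((max (G.degree v) (G.degree w) : ℕ) : ℝ) =
      ((d : ℝ) - k) / d := by
  rw [hG.ncard_commonNeighbors_of_mem_left_of_mem_right hv hw, hG.degree_of_mem_left hv,
    hG.degree_of_mem_right hw, max_eq_left hd, Nat.cast_sub (hG.le_of_mem_left hv)]

theorem div_le_ratio_commonNeighbors (hG : IsOneSidedBipartite G V₁ V₂ k d)
    (hd : Fintype.card V - k ≤ d) (hvw : G.Adj v w) :
    ((d : ℝ) - k) / d ≤
      ((G.commonNeighbors v w).ncard : ℝ) / ((max (G.degree v) (G.degree w) : ℕ) : ℝ) := by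
  rcases hG.mem_or_mem v with hv | hv <;> rcases hG.mem_or_mem w with hw | hw
  · rw [hG.degree_of_mem_left hv, hG.degree_of_mem_left hw, max_self,
      ← Nat.cast_sub (hG.le_of_mem_left hv)]
    gcongr
    exact hG.sub_le_ncard_commonNeighbors_of_mem_left hd hv hw
  · exact (hG.ratio_commonNeighbors_of_mem_left_of_mem_right hd hv hw).ge
  · rw [G.commonNeighbors_symm, max_comm]
    exact (hG.ratio_commonNeighbors_of_mem_left_of_mem_right hd hw hv).ge
  · exact absurd hvw (hG.not_adj_of_mem_right hv hw)

end IsOneSidedBipartite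

theorem stmt15_general {V : Type*} [Fintype V] [DecidableEq V] (G : SimpleGraph V)
    [DecidableRel G.Adj] (V₁ V₂ : Finset V) (n k d : ℕ)
    (hn : n = Fintype.card V) (hk : 0 < k) (hk2 : k ≤ n - 2)
    (hd : n - k ≤ d)
    (hG : IsOneSidedBipartite G V₁ V₂ k d) :
    (∀ v w : V, v ∈ V₁ → w ∈ V₁ → G.Adj v w →
      d - k ≤ (G.commonNeighbors v w).ncard) ∧
    (∀ v w : V, v ∈ V₁ → w ∈ V₂ → G.Adj v w →
      (G.commonNeighbors v w).ncard = d - k) ∧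
    IsLeast {x : ℝ | ∃ v w : V, G.Adj v w ∧
      x = ((G.commonNeighbors v w).ncard : ℝ) /
          ((max (G.degree v) (G.degree w) : ℕ) : ℝ)}
      (((d : ℝ) - (k : ℝ)) / (d : ℝ)) := by
  subst hn
  obtain ⟨v, hv⟩ : V₁.Nonempty := by
    have := hG.card_left_add
    rw [← card_pos]
    omega
  obtain ⟨w, hw⟩ : V₂.Nonempty := by rwa [← card_pos, hG.card_right]
  refine ⟨fun v w hv hw _ => hG.sub_le_ncard_commonNeighbors_of_mem_left hd hv hw,
    fun v w hv hw _ => hG.ncard_commonNeighbors_of_mem_left_of_mem_right hv hw,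
    ⟨v, w, hG.adj_of_mem_left_of_mem_right hv hw,
      (hG.ratio_commonNeighbors_of_mem_left_of_mem_right hd hv hw).symm⟩, ?_⟩
  rintro x ⟨v, w, hvw, rfl⟩
  exact hG.div_le_ratio_commonNeighbors hd hvw

theorem stmt15 {V : Type*} [Fintype V] [DecidableEq V] (G : SimpleGraph V)
    [DecidableRel G.Adj] (V₁ V₂ : Finset V) (n k d : ℕ)
    (hn : n = Fintype.card V) (hk : 0 < k) (hk2 : k ≤ n - 2)
    (hkd : k ≤ d) (hdn : d ≤ n - 1) (hd : n - k ≤ d)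
    (hG : IsOneSidedBipartite G V₁ V₂ k d) :
    (∀ v w : V, v ∈ V₁ → w ∈ V₁ → G.Adj v w →
      d - k ≤ (G.commonNeighbors v w).ncard) ∧
    (∀ v w : V, v ∈ V₁ → w ∈ V₂ → G.Adj v w →
      (G.commonNeighbors v w).ncard = d - k) ∧
    IsLeast {x : ℝ | ∃ v w : V, G.Adj v w ∧
      x = ((G.commonNeighbors v w).ncard : ℝ) /
          ((max (G.degree v) (G.degree w) : ℕ) : ℝ)}
      (((d : ℝ) - (k : ℝ)) / (d : ℝ)) :=
  stmt15_general G V₁ V₂ n k d hn hk hk2 hd hG
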